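/- Let A ∈ ℂ^{n×n} with Av = λv, ‖v‖ = 1, and suppose λ is an eigenvalue of algebraic multiplicity 1. Then u := v − ((Id − vv*)(A − λ·Id)*(Id − vv*))† A* v satisfies (A − λ·Id)* u = 0 (i.e., u is a left eigenvector of A for λ), and ⟨u, v⟩ = 1. -/
import Mathlib


open Matrix Polynomial

section Helpers
variable {n : ℕ}

lemma myVecMulVec_mul (a b : Fin n → ℂ) (M : Matrix (Fin n) (Fin n) ℂ) :
    vecMulVec a b * M = vecMulVec a (b ᵥ* M) := by
  ext i j
  simp [mul_apply, vecMulVec_apply, vecMul, dotProduct, Finset.mul_sum, mul_assoc]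

lemma myMul_vecMulVec (a b : Fin n → ℂ) (M : Matrix (Fin n) (Fin n) ℂ) :
    M * vecMulVec a b = vecMulVec (M *ᵥ a) b := by
  ext i j
  simp [mul_apply, vecMulVec_apply, mulVec, dotProduct, Finset.sum_mul, mul_assoc]

lemma myVecMulVec_mulVec (a b x : Fin n → ℂ) :
    vecMulVec a b *ᵥ x = (b ⬝ᵥ x) • a := by
  ext i
  simp [mulVec, vecMulVec_apply, dotProduct, Finset.mul_sum, mul_assoc, mul_comm, mul_left_comm]

lemma myAevalMulVec (A : Matrix (Fin n) (Fin n) ℂ) (lam : ℂ) (v : Fin n → ℂ)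
    (heig : A.mulVec v = lam • v) (p : ℂ[X]) :
    (aeval A p) *ᵥ v = p.eval lam • v := by
  have hpow : ∀ k : ℕ, A ^ k *ᵥ v = lam ^ k • v := by
    intro k
    induction k with
    | zero => simp
    | succ k ih =>
      rw [pow_succ', pow_succ', ← mulVec_mulVec, ih, mulVec_smul, heig, smul_smul, mul_comm]
  induction p using Polynomial.induction_on' with
  | add p q hp hq => rw [map_add, add_mulVec, hp, hq, eval_add, add_smul]
  | monomial k a =>
    rw [aeval_monomial, eval_monomial, Algebra.algebraMap_eq_smul_one, smul_mul_assoc,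
      one_mul, smul_mulVec, hpow, smul_smul]



end Helpers

/-- `Bd` is the Moore–Penrose pseudoinverse of `B` (the four Penrose
equations, which characterize it uniquely). -/
def IsMoorePenroseInv {n : ℕ} (B Bd : Matrix (Fin n) (Fin n) ℂ) : Prop :=
  B * Bd * B = B ∧ Bd * B * Bd = Bd ∧ (B * Bd)ᴴ = B * Bd ∧ (Bd * B)ᴴ = Bd * B

/-- If `Av = λv`, `‖v‖ = 1` and `λ` has algebraic multiplicity 1, then
`u := v − ((Id − vv*)(A − λId)*(Id − vv*))† A* v` is a left eigenvector:
`(A − λId)* u = 0`, and `⟨u, v⟩ = 1`. -/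
theorem left_eigenvector_formula {n : ℕ} (A : Matrix (Fin n) (Fin n) ℂ)
    (lam : ℂ) (v : Fin n → ℂ)
    (heig : A.mulVec v = lam • v) (hunit : star v ⬝ᵥ v = 1)
    (hmult : A.charpoly.rootMultiplicity lam = 1)
    (Bd : Matrix (Fin n) (Fin n) ℂ)
    (hBd : IsMoorePenroseInv
      ((1 - vecMulVec v (star v)) * (A - lam • 1)ᴴ * (1 - vecMulVec v (star v))) Bd) :
    (A - lam • 1)ᴴ.mulVec (v - Bd.mulVec (Aᴴ.mulVec v)) = 0 ∧
      (v - Bd.mulVec (Aᴴ.mulVec v)) ⬝ᵥ star v = 1 := by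
  set M : Matrix (Fin n) (Fin n) ℂ := (A - lam • 1)ᴴ with hM
  set P : Matrix (Fin n) (Fin n) ℂ := 1 - vecMulVec v (star v) with hP
  set B : Matrix (Fin n) (Fin n) ℂ := P * M * P with hB
  obtain ⟨h1, h2, h3, h4⟩ := hBd
  -- basic facts
  have hv0 : (A - lam • 1) *ᵥ v = 0 := by
    rw [sub_mulVec, heig, smul_mulVec, one_mulVec, sub_self]
  have hMHv : Mᴴ *ᵥ v = 0 := by rw [hM, conjTranspose_conjTranspose]; exact hv0
  have hvM : star v ᵥ* M = 0 := by
    have h := star_mulVec (A - lam • 1) v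
    rw [hv0] at h
    rw [hM, ← h]
    simp
  have hPM : P * M = M := by
    rw [hP, sub_mul, one_mul, myVecMulVec_mul, hvM]
    have : vecMulVec v (0 : Fin n → ℂ) = 0 := by ext i j; simp [vecMulVec_apply]
    rw [this, sub_zero]
  have hPH : Pᴴ = P := by
    rw [hP, conjTranspose_sub, conjTranspose_one]
    congr 1
    ext i j
    simp [vecMulVec_apply, conjTranspose_apply, mul_comm]
  have hstar : star v ᵥ* vecMulVec v (star v) = star v := by
    funext j
    simp only [vecMul, vecMulVec_apply, dotProduct, of_apply, Pi.star_apply, ← mul_assoc]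
    rw [← Finset.sum_mul]
    have h := hunit
    simp only [dotProduct, Pi.star_apply] at h
    rw [h, one_mul]
  have hvvv : vecMulVec v (star v) * vecMulVec v (star v) = vecMulVec v (star v) := by
    rw [myVecMulVec_mul, hstar]
  have hPP : P * P = P := by
    rw [hP, sub_mul, one_mul, mul_sub, mul_one, hvvv, sub_self, sub_zero]
  have hPv : P *ᵥ v = 0 := by
    rw [hP, sub_mulVec, one_mulVec, myVecMulVec_mulVec, hunit, one_smul, sub_self]
  have hBH : Bᴴ = P * Mᴴ * P := by
    rw [hB, conjTranspose_mul, conjTranspose_mul, hPH, mul_assoc]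
  have hBv : B *ᵥ v = 0 := by rw [hB, ← mulVec_mulVec, hPv, mulVec_zero]
  have hBHv : Bᴴ *ᵥ v = 0 := by rw [hBH, ← mulVec_mulVec, hPv, mulVec_zero]
  -- pseudoinverse consequences
  have hA1 : Bd = Bd * Bdᴴ * Bᴴ := by
    calc Bd = Bd * B * Bd := h2.symm
    _ = Bd * (B * Bd) := by rw [mul_assoc]
    _ = Bd * (B * Bd)ᴴ := by rw [h3]
    _ = Bd * (Bdᴴ * Bᴴ) := by rw [conjTranspose_mul]
    _ = Bd * Bdᴴ * Bᴴ := by rw [mul_assoc]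
  have hA2 : Bdᴴ = Bdᴴ * Bd * B := by
    calc Bdᴴ = (Bd * B * Bd)ᴴ := by rw [h2]
    _ = Bdᴴ * (Bd * B)ᴴ := by rw [conjTranspose_mul]
    _ = Bdᴴ * (Bd * B) := by rw [h4]
    _ = Bdᴴ * Bd * B := by rw [mul_assoc]
  have hA3 : Bd = Bᴴ * Bdᴴ * Bd := by
    calc Bd = Bd * B * Bd := h2.symm
    _ = (Bd * B)ᴴ * Bd := by rw [h4]
    _ = Bᴴ * Bdᴴ * Bd := by rw [conjTranspose_mul]
  have hBdv : Bd *ᵥ v = 0 := by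
    rw [hA1, ← mulVec_mulVec, ← mulVec_mulVec, hBHv, mulVec_zero, mulVec_zero]
  have hBdHv : Bdᴴ *ᵥ v = 0 := by
    rw [hA2, ← mulVec_mulVec, ← mulVec_mulVec, hBv, mulVec_zero, mulVec_zero]
  have hPBH : P * Bᴴ = Bᴴ := by rw [hBH, ← mul_assoc, ← mul_assoc, hPP]
  have hPBd : P * Bd = Bd := by
    conv_lhs => rw [hA3]
    conv_rhs => rw [hA3]
    rw [← mul_assoc, ← mul_assoc, hPBH]
  -- characteristic polynomial factorization
  have hcp0 : A.charpoly ≠ 0 := A.charpoly_monic.ne_zero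
  set q : ℂ[X] := A.charpoly /ₘ (X - C lam) with hq
  have hfac : (X - C lam) * q = A.charpoly := by
    have h := A.charpoly.pow_mul_divByMonic_rootMultiplicity_eq lam
    rw [hmult, pow_one] at h
    exact h
  have hqlam : q.eval lam ≠ 0 := by
    have h := eval_divByMonic_pow_rootMultiplicity_ne_zero lam hcp0
    rw [hmult, pow_one] at h
    exact h
  set Q : Matrix (Fin n) (Fin n) ℂ := aeval A q with hQdef
  have haevalX : (aeval A) (X - C lam) = A - lam • 1 := by
    rw [map_sub, aeval_X, aeval_C, Algebra.algebraMap_eq_smul_one]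
  have hCH : Q * (A - lam • 1) = 0 := by
    have h := A.aeval_self_charpoly
    rw [← hfac, mul_comm, _root_.map_mul, haevalX] at h
    exact h
  have hQM : M * Qᴴ = 0 := by
    rw [hM, ← conjTranspose_mul, hCH, conjTranspose_zero]
  have hQv : Q *ᵥ v = q.eval lam • v := myAevalMulVec A lam v heig q
  have hstarq : star (q.eval lam) ≠ 0 := star_ne_zero.mpr hqlam
  set c : ℂ := (star (q.eval lam))⁻¹ with hc
  set x : Fin n → ℂ := v - c • (Qᴴ *ᵥ v) with hx
  have hvQHv : star v ⬝ᵥ (Qᴴ *ᵥ v) = star (q.eval lam) := by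
    rw [dotProduct_mulVec, show star v ᵥ* Qᴴ = star (Q *ᵥ v) from (star_mulVec Q v).symm,
      hQv, star_smul, smul_dotProduct, hunit, smul_eq_mul, mul_one]
  have hvx : star v ⬝ᵥ x = 0 := by
    rw [hx, dotProduct_sub, hunit, dotProduct_smul, hvQHv, smul_eq_mul,
      inv_mul_cancel₀ hstarq, sub_self]
  have hMx : M *ᵥ x = M *ᵥ v := by
    rw [hx, mulVec_sub, mulVec_smul, mulVec_mulVec, hQM, zero_mulVec, smul_zero, sub_zero]
  have hPx : P *ᵥ x = x := by
    rw [hP, sub_mulVec, one_mulVec, myVecMulVec_mulVec, hvx, zero_smul, sub_zero]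
  have hBx : B *ᵥ x = M *ᵥ v := by
    rw [hB, ← mulVec_mulVec, hPx, hPM, hMx]
  set y : Fin n → ℂ := Bd *ᵥ (M *ᵥ v) with hy
  have hPy : P *ᵥ y = y := by rw [hy, mulVec_mulVec, hPBd]
  have hMy : M *ᵥ y = M *ᵥ v := by
    calc M *ᵥ y = (P * M) *ᵥ (P *ᵥ y) := by rw [hPy, hPM]
    _ = B *ᵥ y := by rw [mulVec_mulVec, ← hB]
    _ = (B * Bd) *ᵥ (M *ᵥ v) := by rw [hy, mulVec_mulVec, mulVec_mulVec]
    _ = (B * Bd) *ᵥ (B *ᵥ x) := by rw [hBx]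
    _ = (B * Bd * B) *ᵥ x := by rw [mulVec_mulVec]
    _ = B *ᵥ x := by rw [h1]
    _ = M *ᵥ v := hBx
  have hAHv : Aᴴ *ᵥ v = M *ᵥ v + star lam • v := by
    rw [hM, conjTranspose_sub, conjTranspose_smul, conjTranspose_one, sub_mulVec,
      smul_mulVec, one_mulVec, sub_add_cancel]
  have hBdAv : Bd *ᵥ (Aᴴ *ᵥ v) = y := by
    rw [hAHv, mulVec_add, mulVec_smul, hBdv, smul_zero, add_zero, hy]
  refine ⟨?_, ?_⟩
  · rw [hBdAv, mulVec_sub, hMy, sub_self]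
  · rw [hBdAv, sub_dotProduct, dotProduct_comm v, hunit, dotProduct_comm y,
      hy, dotProduct_mulVec,
      show star v ᵥ* Bd = star (Bdᴴ *ᵥ v) from by rw [star_mulVec, conjTranspose_conjTranspose],
      hBdHv]
    simp
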